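/- Let N be a locally finite point process on ℝ̄₀ with P(N(ℝ̄₀) = 0) = 0 and E[N(ℝ̄₀∖(−a,a))] < ∞ for some a > 0, and suppose the scaled Laplace functional of N is scale-uniquely supported on [g]_sc for some g : (0,∞) → (0,∞). If (c_n)_{n≥1} is a sequence of positive real numbers such that g(c_n·y) converges to h(y) for every y > 0, then either (i) c_n → 0 or c_n → ∞ and h is a constant function with value in {0,1}, or (ii) c_n → c for some c ∈ (0,∞) and h(y) = g(c·y) for all y > 0. -/

import Mathlib

/-!
For `a ≥ 0` the ramp `f_a(x) = a · min(1, (|x| - 1)⁺)` lies in `C_c^+(ℝ̄₀)`, so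
`g(t) = Ψ_N(f_a‖t / c_a)` for `t > 0`. Dominated convergence shows that `g` is continuous on
`(0, ∞)` and tends to `1` at `∞`, and Fatou's lemma that it tends to `E[exp(-a N(ℝ̄₀))]` at `0⁺`
for every `a`; letting `a → ∞` this limit is `P(N(ℝ̄₀) = 0) = 0`.

Extend the profiles `y ↦ g(c y)` to `c ∈ [0, ∞]` by `0` at `c = 0` and `1` at `c = ∞`. Every
cluster point `L ∈ [0, ∞]` of `(c_n)` gives `h = g(L ·)`, and distinct `L` give distinct profiles:
`g` is positive with `g(0⁺) = 0`, and `g(l ·) = g` forces `l = 1`, since otherwise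
`g(t) = g(l^{±k} t) → 0`. By compactness of `[0, ∞]`, `(c_n)` converges.
-/

open MeasureTheory Filter Set
open scoped ENNReal Topology

/-- `expNeg z = exp(-z)` for `z ∈ [0,∞]`, with `expNeg ∞ = 0`. -/
noncomputable def expNeg (z : ℝ≥0∞) : ℝ := if z = ∞ then 0 else Real.exp (-z.toReal)

/-- `f ∈ C_c^+(ℝ̄₀)`: a nonnegative function, continuous on `ℝ̄₀ = [-∞,∞] \ {0}`
(i.e. continuous on `ℝ` with finite limits at `±∞`), vanishing in a neighbourhood of `0`
(compact support in `ℝ̄₀` not containing `0`). -/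
def IsCcPos (f : ℝ → ℝ) : Prop :=
  Continuous f ∧ (∀ x, 0 ≤ f x) ∧ (∃ ε > 0, ∀ x : ℝ, |x| < ε → f x = 0) ∧
  (∃ L : ℝ, Tendsto f atTop (𝓝 L)) ∧ (∃ L : ℝ, Tendsto f atBot (𝓝 L))

/-- A locally finite point process on `ℝ̄₀`: a measurable family of purely atomic
`ℕ ∪ {∞}`-valued measures on `ℝ \ {0}`, a.s. finite on sets bounded away from `0`. -/
def IsPointProcess {Ω : Type*} [MeasurableSpace Ω] (μ : Measure Ω) (N : Ω → Measure ℝ) : Prop :=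
  Measurable N ∧
  (∀ᵐ ω ∂μ, (N ω) {0} = 0) ∧
  (∀ᵐ ω ∂μ, ∀ b : ℝ, 0 < b → (N ω) {x : ℝ | b ≤ |x|} < ∞) ∧
  (∀ᵐ ω ∂μ, ∀ B : Set ℝ, MeasurableSet B → (N ω) B ∈ Set.range ((↑) : ℕ → ℝ≥0∞) ∪ {∞})

/-- The scaled Laplace functional `Ψ_N(f‖y) = E[exp(-∫ f(x/y) N(dx))]`. -/
noncomputable def SLF {Ω : Type*} [MeasurableSpace Ω] (μ : Measure Ω) (N : Ω → Measure ℝ)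
    (f : ℝ → ℝ) (y : ℝ) : ℝ :=
  ∫ ω, expNeg (∫⁻ x, ENNReal.ofReal (f (x / y)) ∂(N ω)) ∂μ

/-- The scaled Laplace functional of `N` is scale-uniquely supported on `[g]_sc`:
for every `f ∈ C_c^+(ℝ̄₀)` there is `c_f > 0` with `Ψ_N(f‖y) = g(c_f · y)` for all `y > 0`. -/
def ScaleUniqSupp {Ω : Type*} [MeasurableSpace Ω] (μ : Measure Ω) (N : Ω → Measure ℝ)
    (g : ℝ → ℝ) : Prop :=
  ∀ f : ℝ → ℝ, IsCcPos f → ∃ c > 0, ∀ y > 0, SLF μ N f y = g (c * y)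

open scoped NNReal

lemma expNeg_zero : expNeg 0 = 1 := by simp [expNeg]

lemma expNeg_top : expNeg ∞ = 0 := by simp [expNeg]

lemma expNeg_nonneg (z : ℝ≥0∞) : 0 ≤ expNeg z := by
  unfold expNeg; split_ifs <;> positivity

lemma expNeg_le_one (z : ℝ≥0∞) : expNeg z ≤ 1 := by
  unfold expNeg; split_ifs
  · exact zero_le_one
  · exact Real.exp_le_one_iff.2 (neg_nonpos.2 ENNReal.toReal_nonneg)

lemma expNeg_eq_toReal_exp (z : ℝ≥0∞) : expNeg z = (EReal.exp (-(z : EReal))).toReal := by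
  rcases eq_or_ne z ∞ with rfl | hz
  · simp [expNeg]
  · lift z to NNReal using hz
    rw [expNeg, if_neg ENNReal.coe_ne_top, EReal.coe_nnreal_eq_coe_real, ← EReal.coe_neg,
      EReal.exp_coe, ENNReal.toReal_ofReal (Real.exp_nonneg _)]
    rfl

lemma continuous_expNeg : Continuous expNeg := by
  simp_rw [funext expNeg_eq_toReal_exp]
  refine continuous_iff_continuousAt.2 fun z => (ENNReal.continuousAt_toReal ?_).comp
    (ENNReal.continuous_exp.comp (continuous_neg.comp continuous_coe_ennreal_ereal)).continuousAt
  have hle : -(z : EReal) ≤ 0 := EReal.neg_le.2 (by simpa using EReal.coe_ennreal_nonneg z)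
  exact ((EReal.exp_le_one_iff.2 hle).trans_lt ENNReal.one_lt_top).ne

lemma tendsto_integral_expNeg {Ω ι : Type*} [MeasurableSpace Ω] {μ : Measure Ω}
    [IsFiniteMeasure μ] {l : Filter ι} [l.IsCountablyGenerated] {F : ι → Ω → ℝ≥0∞}
    {G : Ω → ℝ≥0∞} (hF : ∀ i, Measurable (F i))
    (hlim : ∀ᵐ ω ∂μ, Tendsto (fun i => F i ω) l (𝓝 (G ω))) :
    Tendsto (fun i => ∫ ω, expNeg (F i ω) ∂μ) l (𝓝 (∫ ω, expNeg (G ω) ∂μ)) := by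
  refine tendsto_integral_filter_of_dominated_convergence (fun _ => 1)
    (.of_forall fun i => (continuous_expNeg.measurable.comp (hF i)).aestronglyMeasurable)
    (.of_forall fun i => .of_forall fun ω => ?_) (integrable_const 1) ?_
  · rw [Real.norm_of_nonneg (expNeg_nonneg _)]
    exact expNeg_le_one _
  · filter_upwards [hlim] with ω hω using (continuous_expNeg.tendsto _).comp hω

def ramp (a : ℝ≥0) (x : ℝ) : ℝ := a * min 1 (max (|x| - 1) 0)

lemma continuous_ramp (a : ℝ≥0) : Continuous (ramp a) := by
  unfold ramp; fun_prop

lemma ramp_nonneg (a : ℝ≥0) (x : ℝ) : 0 ≤ ramp a x :=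
  mul_nonneg a.2 (le_min zero_le_one (le_max_right _ _))

lemma ramp_le (a : ℝ≥0) (x : ℝ) : ramp a x ≤ a :=
  mul_le_of_le_one_right a.2 (min_le_left _ _)

lemma ramp_of_abs_le_one (a : ℝ≥0) {x : ℝ} (hx : |x| ≤ 1) : ramp a x = 0 := by
  rw [ramp, max_eq_right (by linarith), min_eq_right zero_le_one, mul_zero]

lemma ramp_of_two_le_abs (a : ℝ≥0) {x : ℝ} (hx : 2 ≤ |x|) : ramp a x = a := by
  rw [ramp, max_eq_left (by linarith), min_eq_left (by linarith), mul_one]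

lemma isCcPos_ramp (a : ℝ≥0) : IsCcPos (ramp a) := by
  refine ⟨continuous_ramp a, ramp_nonneg a, ⟨1, one_pos, fun x hx => ramp_of_abs_le_one a hx.le⟩,
    ⟨a, tendsto_const_nhds.congr' ?_⟩, ⟨a, tendsto_const_nhds.congr' ?_⟩⟩
  · filter_upwards [eventually_ge_atTop 2] with x hx
    rw [ramp_of_two_le_abs a (hx.trans (le_abs_self x))]
  · filter_upwards [eventually_le_atBot (-2)] with x hx
    rw [ramp_of_two_le_abs a (by rw [abs_of_neg (by linarith)]; linarith)]

lemma measurable_ofReal_ramp_div (a : ℝ≥0) (y : ℝ) :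
    Measurable fun x => ENNReal.ofReal (ramp a (x / y)) := by
  have := (continuous_ramp a).measurable; fun_prop

lemma ofReal_ramp_div_le_indicator (a : ℝ≥0) {b y : ℝ} (hb : 0 < b) (hby : b ≤ y) (x : ℝ) :
    ENNReal.ofReal (ramp a (x / y)) ≤ {x : ℝ | b ≤ |x|}.indicator (fun _ => (a : ℝ≥0∞)) x := by
  by_cases hx : b ≤ |x|
  · rw [indicator_of_mem (by exact hx), ← ENNReal.ofReal_coe_nnreal]
    exact ENNReal.ofReal_le_ofReal (ramp_le a _)
  · have hy : 0 < y := hb.trans_le hby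
    rw [ramp_of_abs_le_one a (by rw [abs_div, abs_of_pos hy, div_le_one hy]; linarith)]
    simp

lemma lintegral_indicator_abs_ge (ν : Measure ℝ) (a : ℝ≥0) (b : ℝ) :
    ∫⁻ x, {x : ℝ | b ≤ |x|}.indicator (fun _ => (a : ℝ≥0∞)) x ∂ν = a * ν {x | b ≤ |x|} := by
  rw [lintegral_indicator (measurableSet_le measurable_const measurable_abs), setLIntegral_const]

section RampIntegral

variable {ν : Measure ℝ} (a : ℝ≥0)

lemma continuousAt_lintegral_ramp_div (hν : ∀ b : ℝ, 0 < b → ν {x : ℝ | b ≤ |x|} < ∞)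
    {t : ℝ} (ht : 0 < t) :
    ContinuousAt (fun y => ∫⁻ x, ENNReal.ofReal (ramp a (x / y)) ∂ν) t := by
  refine tendsto_lintegral_filter_of_dominated_convergence
    ({x : ℝ | t / 2 ≤ |x|}.indicator fun _ => (a : ℝ≥0∞))
    (.of_forall fun y => measurable_ofReal_ramp_div a y) ?_ ?_ (.of_forall fun x => ?_)
  · filter_upwards [eventually_ge_nhds (half_lt_self ht)] with y hy
    exact .of_forall (ofReal_ramp_div_le_indicator a (half_pos ht) hy)
  · rw [lintegral_indicator_abs_ge]
    exact ENNReal.mul_ne_top ENNReal.coe_ne_top (hν _ (half_pos ht)).ne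
  · exact ENNReal.continuous_ofReal.continuousAt.comp
      ((continuous_ramp a).continuousAt.comp (continuousAt_const.div continuousAt_id ht.ne'))

lemma tendsto_lintegral_ramp_div_atTop (hν : ∀ b : ℝ, 0 < b → ν {x : ℝ | b ≤ |x|} < ∞) :
    Tendsto (fun y => ∫⁻ x, ENNReal.ofReal (ramp a (x / y)) ∂ν) atTop (𝓝 0) := by
  have hlim := tendsto_lintegral_filter_of_dominated_convergence (μ := ν) (l := atTop)
    (f := fun _ => 0) ({x : ℝ | 1 ≤ |x|}.indicator fun _ => (a : ℝ≥0∞))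
    (.of_forall fun y => measurable_ofReal_ramp_div a y) ?_ ?_ (.of_forall fun x => ?_)
  · simpa using hlim
  · filter_upwards [eventually_ge_atTop 1] with y hy
    exact .of_forall (ofReal_ramp_div_le_indicator a one_pos hy)
  · rw [lintegral_indicator_abs_ge]
    exact ENNReal.mul_ne_top ENNReal.coe_ne_top (hν 1 one_pos).ne
  · refine tendsto_const_nhds.congr' ?_
    filter_upwards [eventually_gt_atTop |x|] with y hy
    have hy0 : 0 < y := (abs_nonneg x).trans_lt hy
    rw [ramp_of_abs_le_one a (by rw [abs_div, abs_of_pos hy0, div_le_one hy0]; exact hy.le),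
      ENNReal.ofReal_zero]

lemma tendsto_lintegral_ramp_div_nhdsGT_zero (hν : ν {0} = 0) :
    Tendsto (fun y => ∫⁻ x, ENNReal.ofReal (ramp a (x / y)) ∂ν) (𝓝[>] 0)
      (𝓝 (a * ν univ)) := by
  set I := fun y => ∫⁻ x, ENNReal.ofReal (ramp a (x / y)) ∂ν
  have hupper : ∀ y, I y ≤ a * ν univ := fun y => by
    rw [← lintegral_const]
    exact lintegral_mono fun x => by
      rw [← ENNReal.ofReal_coe_nnreal]; exact ENNReal.ofReal_le_ofReal (ramp_le a _)
  have hpoint : ∀ x ≠ (0 : ℝ),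
      Tendsto (fun y => ENNReal.ofReal (ramp a (x / y))) (𝓝[>] 0) (𝓝 (a : ℝ≥0∞)) := by
    intro x hx
    refine tendsto_const_nhds.congr' ?_
    filter_upwards [Ioo_mem_nhdsGT (half_pos (abs_pos.2 hx))] with y ⟨hy0, hy⟩
    rw [ramp_of_two_le_abs a (by rw [abs_div, abs_of_pos hy0, le_div_iff₀ hy0]; linarith),
      ENNReal.ofReal_coe_nnreal]
  have hlower : a * ν univ ≤ liminf I (𝓝[>] 0) := by
    calc (a : ℝ≥0∞) * ν univ
        = ∫⁻ x, liminf (fun y => ENNReal.ofReal (ramp a (x / y))) (𝓝[>] 0) ∂ν := by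
          rw [← lintegral_const]
          refine lintegral_congr_ae ?_
          filter_upwards [measure_eq_zero_iff_ae_notMem.1 hν] with x hx
          exact ((hpoint x hx).liminf_eq).symm
      _ ≤ liminf I (𝓝[>] 0) := lintegral_liminf_le fun y => measurable_ofReal_ramp_div a y
  exact tendsto_of_le_liminf_of_limsup_le hlower
    (limsup_le_of_le (by isBoundedDefault) (.of_forall hupper))

end RampIntegral

section LaplaceFunctional

variable {Ω : Type*} [MeasurableSpace Ω] {μ : Measure Ω} {N : Ω → Measure ℝ}

lemma measurable_lintegral_ramp_div (hN : Measurable N) (a : ℝ≥0) (y : ℝ) :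
    Measurable fun ω => ∫⁻ x, ENNReal.ofReal (ramp a (x / y)) ∂(N ω) :=
  (Measure.measurable_lintegral (measurable_ofReal_ramp_div a y)).comp hN

lemma continuousOn_SLF_ramp [IsFiniteMeasure μ] (hN : Measurable N)
    (hlocfin : ∀ᵐ ω ∂μ, ∀ b : ℝ, 0 < b → N ω {x : ℝ | b ≤ |x|} < ∞) (a : ℝ≥0) :
    ContinuousOn (SLF μ N (ramp a)) (Ioi 0) := fun t ht =>
  ContinuousAt.continuousWithinAt <| tendsto_integral_expNeg (measurable_lintegral_ramp_div hN a)
    (by filter_upwards [hlocfin] with ω hω using continuousAt_lintegral_ramp_div a hω ht)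

lemma tendsto_SLF_ramp_atTop [IsProbabilityMeasure μ] (hN : Measurable N)
    (hlocfin : ∀ᵐ ω ∂μ, ∀ b : ℝ, 0 < b → N ω {x : ℝ | b ≤ |x|} < ∞) (a : ℝ≥0) :
    Tendsto (SLF μ N (ramp a)) atTop (𝓝 1) := by
  have : Tendsto (SLF μ N (ramp a)) atTop (𝓝 (∫ _, expNeg 0 ∂μ)) :=
    tendsto_integral_expNeg (measurable_lintegral_ramp_div hN a)
      (by filter_upwards [hlocfin] with ω hω using tendsto_lintegral_ramp_div_atTop a hω)
  simpa [expNeg_zero] using this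

lemma tendsto_SLF_ramp_nhdsGT_zero [IsFiniteMeasure μ] (hN : Measurable N)
    (hatom : ∀ᵐ ω ∂μ, N ω {0} = 0) (a : ℝ≥0) :
    Tendsto (SLF μ N (ramp a)) (𝓝[>] 0) (𝓝 (∫ ω, expNeg (a * N ω univ) ∂μ)) :=
  tendsto_integral_expNeg (measurable_lintegral_ramp_div hN a) (by
    filter_upwards [hatom] with ω hω using tendsto_lintegral_ramp_div_nhdsGT_zero a hω)

lemma tendsto_integral_expNeg_mul_atTop [IsFiniteMeasure μ] (hN : Measurable N)
    (hzero : μ {ω | N ω univ = 0} = 0) :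
    Tendsto (fun a : ℝ≥0 => ∫ ω, expNeg (a * N ω univ) ∂μ) atTop (𝓝 0) := by
  have hlim : ∀ᵐ ω ∂μ, Tendsto (fun a : ℝ≥0 => (a : ℝ≥0∞) * N ω univ) atTop (𝓝 ∞) := by
    filter_upwards [measure_eq_zero_iff_ae_notMem.1 hzero] with ω hω
    simpa [ENNReal.top_mul hω] using ENNReal.Tendsto.mul_const
      (ENNReal.tendsto_coe_nhds_top.2 tendsto_id) (b := N ω univ) (.inl ENNReal.top_ne_zero)
  have := tendsto_integral_expNeg (G := fun _ => ∞)
    (fun a => measurable_const.mul ((Measure.measurable_coe MeasurableSet.univ).comp hN)) hlim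
  simpa [expNeg_top] using this

end LaplaceFunctional

namespace ScaleUniqSupp

variable {Ω : Type*} [MeasurableSpace Ω] {μ : Measure Ω} {N : Ω → Measure ℝ} {g : ℝ → ℝ}

lemma exists_eq_SLF_div (hs : ScaleUniqSupp μ N g) {f : ℝ → ℝ} (hf : IsCcPos f) :
    ∃ c > 0, ∀ t > 0, g t = SLF μ N f (t / c) := by
  obtain ⟨c, hc, hfc⟩ := hs f hf
  refine ⟨c, hc, fun t ht => ?_⟩
  rw [hfc _ (div_pos ht hc), mul_div_cancel₀ t hc.ne']

lemma continuousOn [IsFiniteMeasure μ] (hs : ScaleUniqSupp μ N g) (hN : Measurable N)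
    (hlocfin : ∀ᵐ ω ∂μ, ∀ b : ℝ, 0 < b → N ω {x : ℝ | b ≤ |x|} < ∞) :
    ContinuousOn g (Ioi 0) := by
  obtain ⟨c, hc, hg⟩ := hs.exists_eq_SLF_div (isCcPos_ramp 1)
  exact ((continuousOn_SLF_ramp hN hlocfin 1).comp (continuousOn_id.div_const c)
    fun t ht => div_pos ht hc).congr hg

lemma tendsto_atTop [IsProbabilityMeasure μ] (hs : ScaleUniqSupp μ N g) (hN : Measurable N)
    (hlocfin : ∀ᵐ ω ∂μ, ∀ b : ℝ, 0 < b → N ω {x : ℝ | b ≤ |x|} < ∞) :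
    Tendsto g atTop (𝓝 1) := by
  obtain ⟨c, hc, hg⟩ := hs.exists_eq_SLF_div (isCcPos_ramp 1)
  refine ((tendsto_SLF_ramp_atTop hN hlocfin 1).comp (tendsto_id.atTop_div_const hc)).congr' ?_
  filter_upwards [eventually_gt_atTop 0] with t ht using (hg t ht).symm

lemma tendsto_nhdsGT_zero [IsFiniteMeasure μ] (hs : ScaleUniqSupp μ N g) (hN : Measurable N)
    (hatom : ∀ᵐ ω ∂μ, N ω {0} = 0) (hzero : μ {ω | N ω univ = 0} = 0) :
    Tendsto g (𝓝[>] 0) (𝓝 0) := by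
  set β := fun a : ℝ≥0 => ∫ ω, expNeg (a * N ω univ) ∂μ
  have hlim : ∀ a, Tendsto g (𝓝[>] 0) (𝓝 (β a)) := by
    intro a
    obtain ⟨c, hc, hg⟩ := hs.exists_eq_SLF_div (isCcPos_ramp a)
    have hdiv : Tendsto (· / c) (𝓝[>] (0 : ℝ)) (𝓝[>] 0) :=
      tendsto_nhdsWithin_of_tendsto_nhds_of_eventually_within _
        (((continuous_id.div_const c).tendsto' 0 0 (zero_div c)).mono_left nhdsWithin_le_nhds)
        (eventually_nhdsWithin_of_forall fun t ht => div_pos ht hc)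
    refine ((tendsto_SLF_ramp_nhdsGT_zero hN hatom a).comp hdiv).congr' ?_
    filter_upwards [self_mem_nhdsWithin] with t ht using (hg t ht).symm
  have hβ_one : β 1 = 0 := by
    refine tendsto_nhds_unique (tendsto_const_nhds.congr' ?_)
      (tendsto_integral_expNeg_mul_atTop hN hzero)
    filter_upwards [eventually_ge_atTop 1] with a _ using tendsto_nhds_unique (hlim 1) (hlim a)
  exact hβ_one ▸ hlim 1

end ScaleUniqSupp

lemma tendsto_toReal_of_tendsto_ofReal {ι : Type*} {l : Filter ι} {u : ι → ℝ} {L : ℝ≥0∞}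
    (hu : ∀ i, 0 ≤ u i) (hL : L ≠ ∞) (h : Tendsto (fun i => ENNReal.ofReal (u i)) l (𝓝 L)) :
    Tendsto u l (𝓝 L.toReal) := by
  simpa [ENNReal.toReal_ofReal (hu _)] using
    (ENNReal.tendsto_toReal_iff (fun _ => ENNReal.ofReal_ne_top) hL).2 h

section ScaleLimit

variable {g : ℝ → ℝ}

noncomputable def scaleLimit (g : ℝ → ℝ) (L : ℝ≥0∞) (y : ℝ) : ℝ :=
  if L = 0 then 0 else if L = ∞ then 1 else g (L.toReal * y)

lemma scaleLimit_zero : scaleLimit g 0 = fun _ => 0 := by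
  ext; simp [scaleLimit]

lemma scaleLimit_top : scaleLimit g ∞ = fun _ => 1 := by
  ext; simp [scaleLimit]

lemma scaleLimit_of_ne {L : ℝ≥0∞} (h0 : L ≠ 0) (htop : L ≠ ∞) (y : ℝ) :
    scaleLimit g L y = g (L.toReal * y) := by
  simp [scaleLimit, h0, htop]

lemma tendsto_comp_mul_scaleLimit (hcont : ContinuousOn g (Ioi 0))
    (h0 : Tendsto g (𝓝[>] 0) (𝓝 0)) (h1 : Tendsto g atTop (𝓝 1))
    {ι : Type*} {l : Filter ι} {c : ι → ℝ} (hc : ∀ i, 0 < c i) {L : ℝ≥0∞}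
    (hL : Tendsto (fun i => ENNReal.ofReal (c i)) l (𝓝 L)) {y : ℝ} (hy : 0 < y) :
    Tendsto (fun i => g (c i * y)) l (𝓝 (scaleLimit g L y)) := by
  rcases eq_or_ne L ∞ with rfl | htop
  · rw [scaleLimit_top]
    exact h1.comp ((ENNReal.tendsto_ofReal_nhds_top.1 hL).atTop_mul_const hy)
  have hcy : Tendsto (fun i => c i * y) l (𝓝 (L.toReal * y)) :=
    (tendsto_toReal_of_tendsto_ofReal (fun i => (hc i).le) htop hL).mul_const y
  rcases eq_or_ne L 0 with rfl | h0L
  · rw [scaleLimit_zero]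
    exact h0.comp (tendsto_nhdsWithin_iff.2
      ⟨by simpa using hcy, .of_forall fun i => mul_pos (hc i) hy⟩)
  · rw [scaleLimit_of_ne h0L htop]
    exact ((hcont _ (mul_pos (ENNReal.toReal_pos h0L htop) hy)).continuousAt
      (Ioi_mem_nhds (mul_pos (ENNReal.toReal_pos h0L htop) hy))).tendsto.comp hcy

lemma eq_one_of_comp_mul_eq (h0 : Tendsto g (𝓝[>] 0) (𝓝 0)) (hpos : ∀ t > 0, 0 < g t)
    {l : ℝ} (hl : 0 < l) (hgl : ∀ t > 0, g (l * t) = g t) : l = 1 := by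
  have key : ∀ m : ℝ, 0 < m → m < 1 → (∀ t > 0, g (m * t) = g t) → False := by
    intro m hm0 hm1 hgm
    have hiter : ∀ k : ℕ, g (m ^ k) = g 1 := by
      intro k
      induction k with
      | zero => simp
      | succ k ih => rw [pow_succ', hgm _ (pow_pos hm0 k), ih]
    have hpow : Tendsto (fun k : ℕ => m ^ k) atTop (𝓝[>] 0) := tendsto_nhdsWithin_iff.2
      ⟨tendsto_pow_atTop_nhds_zero_of_lt_one hm0.le hm1, .of_forall fun k => pow_pos hm0 k⟩
    have hlim : Tendsto (fun k : ℕ => g (m ^ k)) atTop (𝓝 (g 1)) := by simp [hiter]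
    exact (hpos 1 one_pos).ne' (tendsto_nhds_unique hlim (h0.comp hpow))
  rcases lt_trichotomy l 1 with hlt | heq | hgt
  · exact (key l hl hlt hgl).elim
  · exact heq
  · refine (key l⁻¹ (inv_pos.2 hl) (inv_lt_one_of_one_lt₀ hgt) fun t ht => ?_).elim
    rw [← hgl _ (mul_pos (inv_pos.2 hl) ht), mul_inv_cancel_left₀ hl.ne']

lemma scaleLimit_injective (h0 : Tendsto g (𝓝[>] 0) (𝓝 0)) (hpos : ∀ t > 0, 0 < g t)
    {L L' : ℝ≥0∞} (h : ∀ y > 0, scaleLimit g L y = scaleLimit g L' y) : L = L' := by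
  wlog hle : L ≤ L' generalizing L L'
  · exact (this (fun y hy => (h y hy).symm) (le_of_not_ge hle)).symm
  rcases eq_or_ne L' ∞ with rfl | htop'
  · rcases eq_or_ne L ∞ with rfl | htop
    · rfl
    rcases eq_or_ne L 0 with rfl | h0L
    · simpa [scaleLimit_zero, scaleLimit_top] using h 1 one_pos
    have hone : Tendsto g (𝓝[>] 0) (𝓝 1) := by
      refine tendsto_const_nhds.congr' ?_
      filter_upwards [self_mem_nhdsWithin] with t ht
      have := h (t / L.toReal) (div_pos ht (ENNReal.toReal_pos h0L htop))
      rwa [scaleLimit_of_ne h0L htop, scaleLimit_top, mul_div_cancel₀ _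
        (ENNReal.toReal_pos h0L htop).ne', eq_comm] at this
    exact absurd (tendsto_nhds_unique hone h0) one_ne_zero
  have htop : L ≠ ∞ := ne_top_of_le_ne_top htop' hle
  rcases eq_or_ne L' 0 with rfl | h0L'
  · exact nonpos_iff_eq_zero.1 hle
  have hL' : 0 < L'.toReal := ENNReal.toReal_pos h0L' htop'
  rcases eq_or_ne L 0 with rfl | h0L
  · have := h 1 one_pos
    rw [scaleLimit_zero, scaleLimit_of_ne h0L' htop'] at this
    exact absurd this (hpos _ (mul_pos hL' one_pos)).ne
  have hL : 0 < L.toReal := ENNReal.toReal_pos h0L htop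
  have hratio : L'.toReal / L.toReal = 1 := by
    refine eq_one_of_comp_mul_eq h0 hpos (div_pos hL' hL) fun t ht => ?_
    have := h (t / L.toReal) (div_pos ht hL)
    rw [scaleLimit_of_ne h0L htop, scaleLimit_of_ne h0L' htop', mul_div_cancel₀ _ hL.ne'] at this
    rw [this, mul_div_assoc', div_mul_eq_mul_div]
  rw [div_eq_one_iff_eq hL.ne'] at hratio
  exact (ENNReal.toReal_eq_toReal_iff' htop htop').1 hratio.symm

theorem exists_tendsto_ofReal_and_eq_scaleLimit (hcont : ContinuousOn g (Ioi 0))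
    (h0 : Tendsto g (𝓝[>] 0) (𝓝 0)) (h1 : Tendsto g atTop (𝓝 1)) (hpos : ∀ t > 0, 0 < g t)
    {ι : Type*} {l : Filter ι} [l.NeBot] {c : ι → ℝ} (hc : ∀ i, 0 < c i) {h : ℝ → ℝ}
    (hlim : ∀ y > 0, Tendsto (fun i => g (c i * y)) l (𝓝 (h y))) :
    ∃ L, Tendsto (fun i => ENNReal.ofReal (c i)) l (𝓝 L) ∧ ∀ y > 0, h y = scaleLimit g L y := by
  have hcluster : ∀ L, MapClusterPt L l (fun i => ENNReal.ofReal (c i)) →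
      ∀ y > 0, h y = scaleLimit g L y := by
    intro L hL y hy
    obtain ⟨U, hUl, hUL⟩ := mapClusterPt_iff_ultrafilter.1 hL
    exact tendsto_nhds_unique ((hlim y hy).mono_left hUl)
      (tendsto_comp_mul_scaleLimit hcont h0 h1 hc hUL hy)
  obtain ⟨L, hL⟩ := exists_clusterPt_of_compactSpace (map (fun i => ENNReal.ofReal (c i)) l)
  refine ⟨L, tendsto_nhds_of_unique_mapClusterPt fun L' hL' =>
    scaleLimit_injective h0 hpos fun y hy => ?_, hcluster L hL⟩
  rw [← hcluster L' hL' y hy, hcluster L hL y hy]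

end ScaleLimit

theorem stmt8_general {Ω : Type*} [MeasurableSpace Ω] (μ : Measure Ω) [IsProbabilityMeasure μ]
    (N : Ω → Measure ℝ) (hN : IsPointProcess μ N)
    (hzero : μ {ω | N ω Set.univ = 0} = 0)
    (g : ℝ → ℝ) (hg : ∀ x > 0, 0 < g x)
    (hsupp : ScaleUniqSupp μ N g)
    (c : ℕ → ℝ) (hc : ∀ n, 0 < c n)
    (h : ℝ → ℝ)
    (hlim : ∀ y > (0:ℝ), Tendsto (fun n => g (c n * y)) atTop (𝓝 (h y))) :
    ((Tendsto c atTop (𝓝 0) ∨ Tendsto c atTop atTop) ∧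
        ∃ v ∈ ({0, 1} : Set ℝ), ∀ y > (0:ℝ), h y = v) ∨
      (∃ c₀ > (0:ℝ), Tendsto c atTop (𝓝 c₀) ∧ ∀ y > (0:ℝ), h y = g (c₀ * y)) := by
  obtain ⟨hNm, hatom, hlocfin, -⟩ := hN
  obtain ⟨L, hcL, hh⟩ := exists_tendsto_ofReal_and_eq_scaleLimit (hsupp.continuousOn hNm hlocfin)
    (hsupp.tendsto_nhdsGT_zero hNm hatom hzero) (hsupp.tendsto_atTop hNm hlocfin) hg hc hlim
  have hc0 : ∀ n, 0 ≤ c n := fun n => (hc n).le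
  rcases eq_or_ne L ∞ with rfl | htop
  · exact .inl ⟨.inr (ENNReal.tendsto_ofReal_nhds_top.1 hcL), 1, by simp,
      by simpa [scaleLimit_top] using hh⟩
  rcases eq_or_ne L 0 with rfl | h0
  · exact .inl ⟨.inl (by simpa using tendsto_toReal_of_tendsto_ofReal hc0 htop hcL), 0, by simp,
      by simpa [scaleLimit_zero] using hh⟩
  · exact .inr ⟨L.toReal, ENNReal.toReal_pos h0 htop, tendsto_toReal_of_tendsto_ofReal hc0 htop hcL,
      fun y hy => (hh y hy).trans (scaleLimit_of_ne h0 htop y)⟩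

/-- under the standing assumptions, if `(c_n)` are positive reals with
`g(c_n·y) → h(y)` for every `y > 0`, then either `c_n → 0` or `c_n → ∞` and `h` is constant
on `(0,∞)` with value in `{0,1}`, or `c_n → c ∈ (0,∞)` and `h(y) = g(c·y)` for all `y > 0`. -/
theorem stmt8 {Ω : Type*} [MeasurableSpace Ω] (μ : Measure Ω) [IsProbabilityMeasure μ]
    (N : Ω → Measure ℝ) (hN : IsPointProcess μ N)
    (hzero : μ {ω | N ω Set.univ = 0} = 0)
    (hfin : ∃ a > 0, ∫⁻ ω, (N ω) {x : ℝ | a ≤ |x|} ∂μ < ∞)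
    (g : ℝ → ℝ) (hg : ∀ x > 0, 0 < g x)
    (hsupp : ScaleUniqSupp μ N g)
    (c : ℕ → ℝ) (hc : ∀ n, 0 < c n)
    (h : ℝ → ℝ)
    (hlim : ∀ y > (0:ℝ), Tendsto (fun n => g (c n * y)) atTop (𝓝 (h y))) :
    ((Tendsto c atTop (𝓝 0) ∨ Tendsto c atTop atTop) ∧
        ∃ v ∈ ({0, 1} : Set ℝ), ∀ y > (0:ℝ), h y = v) ∨
      (∃ c₀ > (0:ℝ), Tendsto c atTop (𝓝 c₀) ∧ ∀ y > (0:ℝ), h y = g (c₀ * y)) :=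
  stmt8_general μ N hN hzero g hg hsupp c hc h hlim
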